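/- A nontrivial linear identity of length 6 is ultimately AC-nice if and only if, up to interchanging its two sides (identifying ⟨s,t,f⟩ with ⟨t,s,f⁻¹⟩), it is the identity (x*y)*z = y*(z*x), i.e., the triple ⟨L₃, R₃, f₀⟩ asserting (a₁*a₂)*a₃ = a₂*(a₃*a₁) for all a₁, a₂, a₃. -/

import Mathlib

/-- Bracketings: full binary trees in which every internal node has two children. -/
inductive Brack : Type
  | leaf : Brack
  | node : Brack → Brack → Brack

/-- Number of leaves of a bracketing. -/
def Brack.leaves : Brack → ℕ
  | .leaf => 1
  | .node l r => l.leaves + r.leaves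

/-- The `s`-product in a magma `G`: evaluate the bracketing `s`, labelling its leaves
from left to right by `a k, a (k+1), …`. -/
def Brack.eval {G : Type*} [Mul G] : Brack → (ℕ → G) → ℕ → G
  | .leaf, a, k => a k
  | .node l r, a, k => l.eval a k * r.eval a (k + l.leaves)

/-- Extend a permutation of `{0, …, n−1}` to `ℕ` (identity elsewhere). -/
def permNat {n : ℕ} (f : Equiv.Perm (Fin n)) (i : ℕ) : ℕ :=
  if h : i < n then (f ⟨i, h⟩ : ℕ) else i

/-- A magma `G` satisfies the linear identity `⟨s, t, f⟩` if for all `a₁, …, aₙ ∈ G`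
the `s`-product of `(a₁, …, aₙ)` equals the `t`-product of `(a_{f(1)}, …, a_{f(n)})`. -/
def Satisfies (G : Type*) [Mul G] {n : ℕ} (s t : Brack) (f : Equiv.Perm (Fin n)) : Prop :=
  ∀ a : ℕ → G, s.eval a 0 = t.eval (fun i => a (permNat f i)) 0

/-- A magma `G` is `m`AC-nice if any two products of the same `m` elements coincide:
for every `a`, all bracketings `s, t` with `m` leaves and all permutations `f, g`,
the `s`-product of `(a_{f(1)}, …, a_{f(m)})` equals the `t`-product of
`(a_{g(1)}, …, a_{g(m)})`. -/
def ACnice (G : Type*) [Mul G] (m : ℕ) : Prop :=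
  ∀ (a : ℕ → G) (s t : Brack), s.leaves = m → t.leaves = m →
    ∀ f g : Equiv.Perm (Fin m),
      s.eval (fun i => a (permNat f i)) 0 = t.eval (fun i => a (permNat g i)) 0

/-!
In a magma with `(x * y) * z = y * (z * x)`, read backwards as `x * (y * z) = (z * x) * y`, a
product whose right factor is not a single element can be rotated so that its right factor gets
shorter; hence every product equals a left-normed product of a rearrangement of its factors. The
left-normed product of five factors is invariant under the 5-cycle `(0 1 3 4 2)` and under
`μ = (0 3 1)(2 4)`, each by a short chain of rewrites. Since `μ ^ 3` is a transposition and 5 is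
prime, these two permutations generate `S₅`, so all products of five given elements coincide.

Conversely, interchanging the two sides of an identity replaces `f` by `f⁻¹`, so it suffices to
treat `⟨L₃, L₃, f⟩`, `⟨R₃, R₃, f⟩` and `⟨L₃, R₃, f⟩`. Apart from `⟨L₃, R₃, f₀⟩`, each of them
holds in one of five magmas on `ℕ` that are not `m`AC-nice for any `m ≥ 3`: the left projection
(when `f 0 = 0`), the right projection (when `f 2 = 2`), the commutative magma `x * y = 2x + 2y`
(when `f 0 = 2`), and magmas in which `(x * y) * z`, respectively `x * (y * z)`, is always `0`.
-/

open Equiv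

universe u

theorem permNat_of_lt {n : ℕ} (f : Perm (Fin n)) {i : ℕ} (h : i < n) : permNat f i = f ⟨i, h⟩ :=
  dif_pos h

theorem permNat_one {n : ℕ} : permNat (1 : Perm (Fin n)) = id := by
  funext i; unfold permNat; split <;> simp

theorem permNat_mul {n : ℕ} (f g : Perm (Fin n)) (i : ℕ) :
    permNat (f * g) i = permNat f (permNat g i) := by
  unfold permNat; split <;> simp_all

theorem Satisfies.symm {G : Type*} [Mul G] {n : ℕ} {s t : Brack} {f : Perm (Fin n)}
    (h : Satisfies G s t f) : Satisfies G t s f⁻¹ := fun a => by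
  simpa [← permNat_mul, permNat_one] using (h fun i => a (permNat f⁻¹ i)).symm

def UltimatelyACnice (G : Type*) [Mul G] : Prop := ∃ m, 3 ≤ m ∧ ACnice G m

theorem ACnice.eval_eq {G : Type*} [Mul G] {m : ℕ} (h : ACnice G m) (a : ℕ → G) {s t : Brack}
    (hs : s.leaves = m) (ht : t.leaves = m) : s.eval a 0 = t.eval a 0 := by
  simpa [permNat_one] using h a s t hs ht 1 1

namespace Brack

theorem leaves_pos (s : Brack) : 0 < s.leaves := by
  induction s with
  | leaf => exact Nat.one_pos
  | node l r ihl _ => exact Nat.add_pos_left ihl _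

theorem eq_leaf_of_leaves_eq_one {s : Brack} (h : s.leaves = 1) : s = leaf := by
  cases s with
  | leaf => rfl
  | node l r => have := l.leaves_pos; have := r.leaves_pos; simp only [leaves] at h; omega

theorem eq_of_leaves_eq_two {s : Brack} (h : s.leaves = 2) : s = node leaf leaf := by
  cases s with
  | leaf => simp [leaves] at h
  | node l r =>
    have := l.leaves_pos; have := r.leaves_pos; simp only [leaves] at h
    rw [eq_leaf_of_leaves_eq_one (by omega : l.leaves = 1),
      eq_leaf_of_leaves_eq_one (by omega : r.leaves = 1)]

def leftComb : ℕ → Brack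
  | 0 => leaf
  | n + 1 => node (leftComb n) leaf

def rightComb : ℕ → Brack
  | 0 => leaf
  | n + 1 => node leaf (rightComb n)

@[simp] theorem leaves_leftComb (n : ℕ) : (leftComb n).leaves = n + 1 := by
  induction n with
  | zero => rfl
  | succ n ih => simp [leftComb, leaves, ih]

@[simp] theorem leaves_rightComb (n : ℕ) : (rightComb n).leaves = n + 1 := by
  induction n with
  | zero => rfl
  | succ n ih => simp [rightComb, leaves, ih]; omega

theorem eq_leftComb_or_rightComb_of_leaves_eq_three {s : Brack} (h : s.leaves = 3) :
    s = leftComb 2 ∨ s = rightComb 2 := by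
  cases s with
  | leaf => simp [leaves] at h
  | node l r =>
    have := l.leaves_pos; have := r.leaves_pos; simp only [leaves] at h
    rcases (by omega : l.leaves = 2 ∧ r.leaves = 1 ∨ l.leaves = 1 ∧ r.leaves = 2) with
      ⟨hl, hr⟩ | ⟨hl, hr⟩
    · left; rw [eq_of_leaves_eq_two hl, eq_leaf_of_leaves_eq_one hr]; rfl
    · right; rw [eq_leaf_of_leaves_eq_one hl, eq_of_leaves_eq_two hr]; rfl

end Brack

open Brack

theorem cyclicAssoc_of_satisfies {G : Type*} [Mul G]
    (h : Satisfies G (leftComb 2) (rightComb 2) (finRotate 3)) (x y z : G) :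
    x * y * z = y * (z * x) :=
  h fun i => [x, y, z].getD i x

theorem List.Perm.exists_eq_ofFn_comp {α : Type*} {n : ℕ} {l : List α} {c : Fin n → α}
    (h : l.Perm (List.ofFn c)) : ∃ σ : Equiv.Perm (Fin n), l = List.ofFn (c ∘ σ) := by
  classical
  have hl : l.length = n := by simpa using h.length_eq
  let τ : Fin n → Fin n := fun i => Fin.cast (by simp) (h.idxBij (Fin.cast hl.symm i))
  have hτ : τ.Injective := fun i j hij => by
    simpa [τ, Fin.cast_inj] using h.idxBij_injective (Fin.cast_injective _ hij)
  refine ⟨Equiv.ofBijective τ (Finite.injective_iff_bijective.mp hτ),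
    List.ext_getElem (by simp [hl]) fun i h₁ _ => ?_⟩
  rw [← h.getElem_idxBij_eq_getElem ⟨i, h₁⟩, List.getElem_ofFn, List.getElem_ofFn]
  rfl

theorem List.map_range'_permNat_perm {α : Type*} {n : ℕ} (f : Equiv.Perm (Fin n)) (a : ℕ → α) :
    ((List.range' 0 n).map fun i => a (permNat f i)).Perm (List.ofFn fun i : Fin n => a i) := by
  have : (List.range' 0 n).map (fun i => a (permNat f i)) =
      List.ofFn ((fun i : Fin n => a i) ∘ f) :=
    List.ext_getElem (by simp) fun i h₁ h₂ => by simp [permNat_of_lt f (by simpa using h₁)]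
  exact this ▸ f.ofFn_comp_perm _

section Products

variable {G : Type*} [Mul G]

inductive IsProduct : List G → G → Prop
  | single (x : G) : IsProduct [x] x
  | mul {l₁ l₂ : List G} {x y : G} : IsProduct l₁ x → IsProduct l₂ y → IsProduct (l₁ ++ l₂) (x * y)

theorem Brack.isProduct_eval (s : Brack) (a : ℕ → G) (k : ℕ) :
    IsProduct ((List.range' k s.leaves).map a) (s.eval a k) := by
  induction s generalizing k with
  | leaf => exact .single _
  | node l r ihl ihr =>
    rw [Brack.leaves, ← List.range'_append, List.map_append]
    exact (ihl k).mul (by simpa using ihr (k + l.leaves))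

theorem IsProduct.exists_perm_mul_right (hG : ∀ x y z : G, x * y * z = y * (z * x))
    {l₁ l₂ : List G} {x y : G} (hx : IsProduct l₁ x) (hy : IsProduct l₂ y) :
    ∃ l e T, (l₁ ++ l₂).Perm (l ++ [e]) ∧ IsProduct l T ∧ x * y = T * e := by
  induction hy generalizing l₁ x with
  | single e => exact ⟨l₁, e, x, .refl _, hx, rfl⟩
  | @mul m₁ m₂ y₁ y₂ _ hy₂ ih₁ _ =>
    obtain ⟨l, e, T, hp, hT, he⟩ := ih₁ (hy₂.mul hx)
    refine ⟨l, e, T, List.Perm.trans ?_ hp, hT, by rw [← he, hG]⟩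
    simpa only [List.append_assoc] using List.perm_append_comm (l₁ := l₁ ++ m₁) (l₂ := m₂)

theorem IsProduct.exists_perm_foldl (hG : ∀ x y z : G, x * y * z = y * (z * x))
    {l : List G} {x : G} (h : IsProduct l x) :
    ∃ y t, l.Perm (y :: t) ∧ x = t.foldl (· * ·) y := by
  induction hn : l.length using Nat.strong_induction_on generalizing l x with
  | _ n ih =>
  cases h with
  | single x => exact ⟨x, [], .refl _, rfl⟩
  | mul h₁ h₂ =>
    obtain ⟨l', e, T, hp, hT, he⟩ := h₁.exists_perm_mul_right hG h₂
    have hlen : l'.length < n := by simpa [← hn] using hp.length_eq.symm.le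
    obtain ⟨y, t, hp', rfl⟩ := ih _ hlen hT rfl
    exact ⟨y, t ++ [e], hp.trans (hp'.append_right [e]), by rw [he, List.foldl_concat]⟩

def leftProd5 (c : Fin 5 → G) : G := c 0 * c 1 * c 2 * c 3 * c 4

def leftProd5Stabilizer (G : Type*) [Mul G] : Subgroup (Perm (Fin 5)) where
  carrier := {σ | ∀ c : Fin 5 → G, leftProd5 (c ∘ σ) = leftProd5 c}
  one_mem' _ := rfl
  mul_mem' {σ τ} hσ hτ c := (hτ (c ∘ σ)).trans (hσ c)
  inv_mem' {σ} hσ c := by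
    simpa [Function.comp_assoc] using (hσ (c ∘ ⇑σ⁻¹)).symm

theorem fiveCycle_mem_leftProd5Stabilizer (hG : ∀ x y z : G, x * y * z = y * (z * x)) :
    c[0, 1, 3, 4, 2] ∈ leftProd5Stabilizer G := fun c => by
  change c 1 * c 3 * c 0 * c 4 * c 2 = c 0 * c 1 * c 2 * c 3 * c 4
  calc c 1 * c 3 * c 0 * c 4 * c 2
      = c 0 * (c 4 * (c 1 * c 3)) * c 2 := by rw [hG (c 1 * c 3) (c 0) (c 4)]
    _ = c 4 * (c 1 * c 3) * (c 2 * c 0) := by rw [hG (c 0) (c 4 * (c 1 * c 3)) (c 2)]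
    _ = c 1 * c 3 * (c 2 * c 0 * c 4) := by rw [hG (c 4) (c 1 * c 3) (c 2 * c 0)]
    _ = c 3 * (c 2 * c 0 * c 4 * c 1) := by rw [hG (c 1) (c 3) (c 2 * c 0 * c 4)]
    _ = c 3 * (c 4 * (c 1 * (c 2 * c 0))) := by rw [hG (c 2 * c 0) (c 4) (c 1)]
    _ = c 3 * (c 4 * (c 0 * c 1 * c 2)) := by rw [hG (c 0) (c 1) (c 2)]
    _ = c 0 * c 1 * c 2 * c 3 * c 4 := (hG (c 0 * c 1 * c 2) (c 3) (c 4)).symm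

theorem threeCycle_mul_swap_mem_leftProd5Stabilizer (hG : ∀ x y z : G, x * y * z = y * (z * x)) :
    c[0, 3, 1] * c[2, 4] ∈ leftProd5Stabilizer G := fun c => by
  change c 3 * c 0 * c 4 * c 1 * c 2 = c 0 * c 1 * c 2 * c 3 * c 4
  calc c 3 * c 0 * c 4 * c 1 * c 2
      = c 4 * (c 1 * (c 3 * c 0)) * c 2 := by rw [hG (c 3 * c 0) (c 4) (c 1)]
    _ = c 4 * (c 0 * c 1 * c 3) * c 2 := by rw [hG (c 0) (c 1) (c 3)]
    _ = c 0 * c 1 * c 3 * (c 2 * c 4) := by rw [hG (c 4) (c 0 * c 1 * c 3) (c 2)]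
    _ = c 3 * (c 2 * c 4 * (c 0 * c 1)) := by rw [hG (c 0 * c 1) (c 3) (c 2 * c 4)]
    _ = c 3 * (c 4 * (c 0 * c 1 * c 2)) := by rw [hG (c 2) (c 4) (c 0 * c 1)]
    _ = c 0 * c 1 * c 2 * c 3 * c 4 := (hG (c 0 * c 1 * c 2) (c 3) (c 4)).symm

theorem leftProd5Stabilizer_eq_top (hG : ∀ x y z : G, x * y * z = y * (z * x)) :
    leftProd5Stabilizer G = ⊤ := by
  have hgen : Subgroup.closure {c[0, 1, 3, 4, 2], (c[0, 3, 1] * c[2, 4]) ^ 3} =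
      (⊤ : Subgroup (Perm (Fin 5))) :=
    Perm.closure_prime_cycle_swap (by norm_num) (Cycle.isCycle_formPerm _ _ (by simp)) (by decide)
      ⟨2, 4, by decide, by decide⟩
  rw [eq_top_iff, ← hgen, Subgroup.closure_le, Set.insert_subset_iff, Set.singleton_subset_iff]
  exact ⟨fiveCycle_mem_leftProd5Stabilizer hG,
    pow_mem (threeCycle_mul_swap_mem_leftProd5Stabilizer hG) 3⟩

theorem IsProduct.eq_leftProd5 (hG : ∀ x y z : G, x * y * z = y * (z * x))
    {l : List G} {x : G} (h : IsProduct l x) {c : Fin 5 → G} (hl : l.Perm (List.ofFn c)) :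
    x = leftProd5 c := by
  obtain ⟨y, t, hp, rfl⟩ := h.exists_perm_foldl hG
  obtain ⟨σ, hσ⟩ := (hp.symm.trans hl).exists_eq_ofFn_comp
  simp only [List.ofFn_succ, List.ofFn_zero, List.cons.injEq] at hσ
  obtain ⟨rfl, rfl⟩ := hσ
  exact (leftProd5Stabilizer_eq_top hG ▸ Subgroup.mem_top σ : σ ∈ leftProd5Stabilizer G) c

theorem acNice_five (hG : ∀ x y z : G, x * y * z = y * (z * x)) : ACnice G 5 := by
  have key : ∀ (a : ℕ → G) (s : Brack), s.leaves = 5 → ∀ f : Perm (Fin 5),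
      s.eval (fun i => a (permNat f i)) 0 = leftProd5 fun i => a i := fun a s hs f =>
    (s.isProduct_eval _ 0).eq_leftProd5 hG (by rw [hs]; exact List.map_range'_permNat_perm f a)
  intro a s t hs ht f g
  rw [key a s hs, key a t ht]

end Products

@[ext]
structure NatMagma (op : ℕ → ℕ → ℕ) : Type u where
  val : ℕ

namespace NatMagma

variable {op : ℕ → ℕ → ℕ}

instance : Mul (NatMagma.{u} op) := ⟨fun x y => ⟨op x.val y.val⟩⟩

@[simp] theorem val_mul (x y : NatMagma.{u} op) : (x * y).val = op x.val y.val := rfl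

end NatMagma

abbrev LeftProj : Type u := NatMagma.{u} fun x _ => x

theorem LeftProj.eval (s : Brack) (a : ℕ → LeftProj.{u}) (k : ℕ) : s.eval a k = a k := by
  induction s generalizing k with
  | leaf => rfl
  | node l r ihl _ => exact ihl k

theorem LeftProj.satisfies {s t : Brack} {n : ℕ} {f : Perm (Fin (n + 1))} (hf : f 0 = 0) :
    Satisfies LeftProj.{u} s t f := fun a => by
  simp [LeftProj.eval, permNat_of_lt f n.succ_pos, hf]

theorem LeftProj.not_ultimatelyACnice : ¬ UltimatelyACnice LeftProj.{u} := by
  rintro ⟨_, hm, h⟩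
  obtain ⟨k, rfl⟩ := Nat.exists_eq_add_of_le' hm
  have := h (fun i => ⟨i⟩) (leftComb (k + 2)) (leftComb (k + 2)) (by simp) (by simp)
    1 (swap 0 1)
  simp [LeftProj.eval, permNat_one, permNat_of_lt (swap _ _) (show 0 < k + 3 by omega)] at this

abbrev RightProj : Type u := NatMagma.{u} fun _ y => y

theorem RightProj.eval (s : Brack) (a : ℕ → RightProj.{u}) (k : ℕ) :
    s.eval a k = a (k + s.leaves - 1) := by
  induction s generalizing k with
  | leaf => rfl
  | node l r _ ihr =>
    change r.eval a (k + l.leaves) = _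
    rw [ihr, leaves, Nat.add_assoc]

theorem RightProj.satisfies {s t : Brack} {n : ℕ} (hs : s.leaves = n + 1) (ht : t.leaves = n + 1)
    {f : Perm (Fin (n + 1))} (hf : f (Fin.last n) = Fin.last n) :
    Satisfies RightProj.{u} s t f := fun a => by
  rw [RightProj.eval, RightProj.eval, hs, ht, Nat.zero_add, Nat.add_sub_cancel,
    permNat_of_lt f n.lt_succ_self]
  exact congrArg (a ∘ Fin.val) hf.symm

theorem RightProj.not_ultimatelyACnice : ¬ UltimatelyACnice RightProj.{u} := by
  rintro ⟨_, hm, h⟩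
  obtain ⟨k, rfl⟩ := Nat.exists_eq_add_of_le' hm
  have := h (fun i => ⟨i⟩) (leftComb (k + 2)) (leftComb (k + 2)) (by simp) (by simp)
    1 (swap 0 ⟨k + 2, by omega⟩)
  simp [RightProj.eval, permNat_one, permNat_of_lt (swap _ _) (show k + 2 < k + 3 by omega)] at this

theorem satisfies_of_mul_comm {G : Type*} [Mul G] (hG : ∀ x y : G, x * y = y * x)
    {f : Perm (Fin 3)} (hf : f 0 = 2) : Satisfies G (leftComb 2) (rightComb 2) f := fun a => by
  have hf' : f 1 = 0 ∧ f 2 = 1 ∨ f 1 = 1 ∧ f 2 = 0 := by revert f; decide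
  change a 0 * a 1 * a 2 = a (permNat f 0) * (a (permNat f 1) * a (permNat f 2))
  simp only [permNat_of_lt f (by norm_num : 0 < 3), permNat_of_lt f (by norm_num : 1 < 3),
    permNat_of_lt f (by norm_num : 2 < 3)]
  rcases hf' with ⟨h₁, h₂⟩ | ⟨h₁, h₂⟩ <;> simp [hf, h₁, h₂, hG (a 2), hG (a 1) (a 0)]

abbrev Doubling : Type u := NatMagma.{u} fun x y => 2 * x + 2 * y

theorem Doubling.mul_comm (x y : Doubling.{u}) : x * y = y * x :=
  NatMagma.ext (Nat.add_comm _ _)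

theorem Doubling.eval_eq_zero (s : Brack) {a : ℕ → Doubling.{u}} {k : ℕ}
    (ha : ∀ i, k ≤ i → (a i).val = 0) : (s.eval a k).val = 0 := by
  induction s generalizing k with
  | leaf => exact ha k le_rfl
  | node l r ihl ihr =>
    change 2 * (l.eval a k).val + 2 * (r.eval a (k + l.leaves)).val = 0
    rw [ihl ha, ihr fun i hi => ha i (by omega)]

theorem Doubling.not_ultimatelyACnice : ¬ UltimatelyACnice Doubling.{u} := by
  rintro ⟨_, hm, h⟩
  obtain ⟨k, rfl⟩ := Nat.exists_eq_add_of_le' hm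
  let a : ℕ → Doubling.{u} := fun i => ⟨if i = 0 then 1 else 0⟩
  have hzero : ∀ i, 1 ≤ i → (a i).val = 0 := fun i hi => if_neg (by omega)
  have hleft : ∀ n, ((leftComb n).eval a 0).val = 2 ^ n := by
    intro n
    induction n with
    | zero => rfl
    | succ n ih =>
      change 2 * ((leftComb n).eval a 0).val + 2 * (a (0 + (leftComb n).leaves)).val = _
      rw [ih, hzero _ (by simp), pow_succ]
      ring
  have hright : ((rightComb (k + 2)).eval a 0).val = 2 := by
    change 2 * 1 + 2 * ((rightComb (k + 1)).eval a (0 + 1)).val = 2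
    rw [Doubling.eval_eq_zero _ fun i hi => hzero i (by omega)]
  have := congrArg NatMagma.val (h.eval_eq a (s := leftComb (k + 2)) (t := rightComb (k + 2))
    (by simp) (by simp))
  rw [hleft, hright] at this
  have : 2 ^ 2 ≤ 2 ^ (k + 2) := Nat.pow_le_pow_right (by norm_num) (by omega)
  omega

abbrev LeftNull : Type u := NatMagma.{u} fun x y => if x = 2 ∧ y = 1 then 1 else 0

theorem LeftNull.val_mul_mul (x y z : LeftNull.{u}) : (x * y * z).val = 0 := by
  simp only [NatMagma.val_mul]
  split_ifs <;> simp_all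

theorem LeftNull.satisfies (f : Perm (Fin 3)) :
    Satisfies LeftNull.{u} (leftComb 2) (leftComb 2) f := fun _ =>
  NatMagma.ext ((LeftNull.val_mul_mul _ _ _).trans (LeftNull.val_mul_mul _ _ _).symm)

theorem LeftNull.not_ultimatelyACnice : ¬ UltimatelyACnice LeftNull.{u} := by
  rintro ⟨_, hm, h⟩
  obtain ⟨k, rfl⟩ := Nat.exists_eq_add_of_le' hm
  let a : ℕ → LeftNull.{u} := fun i => ⟨if i < k + 2 then 2 else 1⟩
  have hright : ∀ n j, j + n = k + 2 → ((rightComb n).eval a j).val = 1 := by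
    intro n
    induction n with
    | zero => intro j hj; exact if_neg (by omega)
    | succ n ih =>
      intro j hj
      change (if (a j).val = 2 ∧ ((rightComb n).eval a (j + 1)).val = 1 then 1 else 0) = 1
      rw [ih (j + 1) (by omega), if_pos ⟨if_pos (by omega), rfl⟩]
  have := congrArg NatMagma.val (h.eval_eq a (s := leftComb (k + 2)) (t := rightComb (k + 2))
    (by simp) (by simp))
  have hleft : ((leftComb (k + 2)).eval a 0).val = 0 := LeftNull.val_mul_mul _ _ _
  rw [hleft, hright _ 0 (by omega)] at this
  exact absurd this (by norm_num)

abbrev RightNull : Type u := NatMagma.{u} fun x y => if x = 1 ∧ y = 2 then 1 else 0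

theorem RightNull.val_mul_mul (x y z : RightNull.{u}) : (x * (y * z)).val = 0 := by
  simp only [NatMagma.val_mul]
  split_ifs <;> simp_all

theorem RightNull.satisfies (f : Perm (Fin 3)) :
    Satisfies RightNull.{u} (rightComb 2) (rightComb 2) f := fun _ =>
  NatMagma.ext ((RightNull.val_mul_mul _ _ _).trans (RightNull.val_mul_mul _ _ _).symm)

theorem RightNull.not_ultimatelyACnice : ¬ UltimatelyACnice RightNull.{u} := by
  rintro ⟨_, hm, h⟩
  obtain ⟨k, rfl⟩ := Nat.exists_eq_add_of_le' hm
  let a : ℕ → RightNull.{u} := fun i => ⟨if i = 0 then 1 else 2⟩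
  have hleft : ∀ n, ((leftComb n).eval a 0).val = 1 := by
    intro n
    induction n with
    | zero => rfl
    | succ n ih =>
      change (if ((leftComb n).eval a 0).val = 1 ∧ (a (0 + (leftComb n).leaves)).val = 2
        then 1 else 0) = 1
      rw [ih, if_pos ⟨rfl, if_neg (by simp)⟩]
  have := congrArg NatMagma.val (h.eval_eq a (s := leftComb (k + 2)) (t := rightComb (k + 2))
    (by simp) (by simp))
  have hright : ((rightComb (k + 2)).eval a 0).val = 0 := RightNull.val_mul_mul _ _ _
  rw [hleft, hright] at this
  exact absurd this (by norm_num)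

theorem Equiv.Perm.eq_finRotate_three {f : Perm (Fin 3)} (h₀ : f 0 ≠ 0) (h₂ : f 2 ≠ 2)
    (h₀₂ : f 0 ≠ 2) : f = finRotate 3 := by
  revert f; decide

theorem eq_finRotate_of_forall_satisfies {f : Perm (Fin 3)}
    (h : ∀ (G : Type u) [Mul G], Satisfies G (leftComb 2) (rightComb 2) f → UltimatelyACnice G) :
    f = finRotate 3 :=
  Perm.eq_finRotate_three
    (fun hf => LeftProj.not_ultimatelyACnice (h _ (LeftProj.satisfies hf)))
    (fun hf => RightProj.not_ultimatelyACnice (h _ (RightProj.satisfies (by simp) (by simp) hf)))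
    (fun hf => Doubling.not_ultimatelyACnice (h _ (satisfies_of_mul_comm Doubling.mul_comm hf)))

theorem stmt11.{w} (s t : Brack) (hs : s.leaves = 3) (ht : t.leaves = 3)
    (f : Equiv.Perm (Fin 3)) (hnt : ¬(s = t ∧ f = 1)) :
    (∀ (G : Type w) [Mul G], Satisfies G s t f → ∃ m, 3 ≤ m ∧ ACnice G m) ↔
      ((s = Brack.node (.node .leaf .leaf) .leaf ∧ t = Brack.node .leaf (.node .leaf .leaf) ∧
          f = finRotate 3) ∨
        (s = Brack.node .leaf (.node .leaf .leaf) ∧ t = Brack.node (.node .leaf .leaf) .leaf ∧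
          f = (finRotate 3)⁻¹)) := by
  constructor
  · intro h
    rcases eq_leftComb_or_rightComb_of_leaves_eq_three hs with rfl | rfl <;>
      rcases eq_leftComb_or_rightComb_of_leaves_eq_three ht with rfl | rfl
    · exact (LeftNull.not_ultimatelyACnice (h _ (LeftNull.satisfies f))).elim
    · exact .inl ⟨rfl, rfl, eq_finRotate_of_forall_satisfies h⟩
    · refine .inr ⟨rfl, rfl, ?_⟩
      rw [← eq_finRotate_of_forall_satisfies (f := f⁻¹) fun G _ hG => h G (inv_inv f ▸ hG.symm),
        inv_inv]
    · exact (RightNull.not_ultimatelyACnice (h _ (RightNull.satisfies f))).elim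
  · rintro (⟨rfl, rfl, rfl⟩ | ⟨rfl, rfl, rfl⟩) G _ hG
    · exact ⟨5, by norm_num, acNice_five (cyclicAssoc_of_satisfies hG)⟩
    · exact ⟨5, by norm_num,
        acNice_five (cyclicAssoc_of_satisfies (inv_inv (finRotate 3) ▸ hG.symm))⟩
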